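/- Let (S,d) be a finite metric space partitioned into groups S_1, ..., S_m, let k_1, ..., k_m ∈ ℕ with k_i ≤ |S_i| for each i, let k = k_1 + ... + k_m ≥ 1, let C0 ⊆ S, and let r*_fair be the optimal fair k-center cost. Let c̃_1, ..., c̃_k be a greedy sequence of length k on S with respect to C0 whose entries are pairwise distinct, let a be a closest-center assignment for c̃_1, ..., c̃_k and C0 with clusters L_i = a^{-1}(c̃_i), and for each i ∈ {1, ..., k} let y_i be any element of L_i ∪ {c̃_i}. Then every s ∈ S satisfies d(s, {y_1, ..., y_k} ∪ C0) ≤ 4 r*_fair. (Base case of the inductive bound in the proof of the paper's Theorem 2: running the greedy strategy and then exchanging each center for an arbitrary element of its cluster yields covering radius at most 4 r*_fair.) -/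

import Mathlib

/-- `c` is a greedy (farthest-point) sequence of length `k` on `S'` with respect to the
initially given centers `C0'`. -/
def IsGreedySeq {X : Type*} [MetricSpace X] (S' C0' : Set X) {k : ℕ} (c : Fin k → X) : Prop :=
  (∀ i, c i ∈ S') ∧
  ∀ i : Fin k, ∀ s ∈ S',
    Metric.infDist s (C0' ∪ c '' {j | j < i}) ≤ Metric.infDist (c i) (C0' ∪ c '' {j | j < i})

/-!
Gonzalez' argument. If the greedy centers left some point `s` at distance `ρ` from
`range c ∪ C0`, then `s, c 0, …, c (k-1)` would be `k + 1` points that are pairwise `ρ`-apart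
and `ρ`-far from `C0`. A fair solution `C` has exactly `k` centers, so either one of these
points is served by `C0`, or two of them share a center of `C`; in both cases `ρ ≤ 2 r*_fair`.
Exchanging a greedy center for a point of its cluster costs at most one more greedy radius,
which gives `4 r*_fair`.
-/

open Metric Set

theorem Set.ncard_eq_sum_ncard_inter_fiber {α ι : Type*} [Fintype ι] {C : Set α}
    (hC : C.Finite) (G : α → ι) : C.ncard = ∑ i, (C ∩ {x | G x = i}).ncard := by
  have hC_eq : C = ⋃ i, C ∩ {x | G x = i} := by
    ext x; simp
  conv_lhs => rw [hC_eq]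
  rw [ncard_iUnion_of_finite (fun i => hC.inter_of_left _), finsum_eq_sum_of_fintype]
  intro i j hij
  exact Disjoint.inter_left' _ (Disjoint.inter_right' _
    (disjoint_left.2 fun x hi hj => hij (hi.symm.trans hj)))

section Metric

variable {X : Type*} [MetricSpace X]

theorem exists_mem_dist_le_iSup_infDist [Finite X] {T : Set X} (hT : T.Nonempty) (x : X) :
    ∃ w ∈ T, dist x w ≤ ⨆ s, infDist s T := by
  obtain ⟨w, hw, hxw⟩ := T.toFinite.isCompact.exists_infDist_eq_dist hT x
  exact ⟨w, hw, hxw ▸ le_ciSup (f := fun s => infDist s T) (finite_range _).bddAbove x⟩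

theorem le_two_mul_of_separated_of_covered {ι : Type*} [Finite ι] {p : ι → X}
    {C C0 : Set X} {ρ r : ℝ} (hC : C.Finite) (hcard : C.ncard < Nat.card ι)
    (hsep : Pairwise fun u v => ρ ≤ dist (p u) (p v))
    (hsep0 : ∀ u, ∀ x ∈ C0, ρ ≤ dist (p u) x)
    (hcov : ∀ u, ∃ w ∈ C ∪ C0, dist (p u) w ≤ r) : ρ ≤ 2 * r := by
  choose z hzC hz using hcov
  by_cases hC0 : ∃ u, z u ∈ C0
  · obtain ⟨u, hu⟩ := hC0
    linarith [hsep0 u _ hu, hz u, dist_nonneg.trans (hz u)]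
  · simp only [not_exists] at hC0
    obtain ⟨u, -, v, -, huv, hzuv⟩ := exists_ne_map_eq_of_ncard_lt_of_maps_to
      (s := univ) (by rwa [ncard_univ]) (fun u _ => (hzC u).resolve_right (hC0 u)) hC
    calc ρ ≤ dist (p u) (p v) := hsep huv
      _ ≤ dist (p u) (z u) + dist (p v) (z v) := by
        rw [hzuv, dist_comm (p v)]; exact dist_triangle _ _ _
      _ ≤ 2 * r := by linarith [hz u, hz v]

namespace IsGreedySeq

variable {k : ℕ} {C0 : Set X} {c : Fin k → X}

theorem infDist_le_dist (hc : IsGreedySeq univ C0 c) (s : X) {i : Fin k} {x : X}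
    (hx : x ∈ C0 ∪ c '' {j | j < i}) : infDist s (range c ∪ C0) ≤ dist (c i) x := by
  have hsub : C0 ∪ c '' {j | j < i} ⊆ range c ∪ C0 := by
    rintro z (hz | ⟨j, -, rfl⟩)
    · exact Or.inr hz
    · exact Or.inl ⟨j, rfl⟩
  calc infDist s (range c ∪ C0) ≤ infDist s (C0 ∪ c '' {j | j < i}) :=
        infDist_le_infDist_of_subset hsub ⟨x, hx⟩
    _ ≤ infDist (c i) (C0 ∪ c '' {j | j < i}) := hc.2 i s (mem_univ s)
    _ ≤ dist (c i) x := infDist_le_dist_of_mem hx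

theorem infDist_le_two_mul (hc : IsGreedySeq univ C0 c) {C : Set X} {r : ℝ} (hC : C.Finite)
    (hcard : C.ncard ≤ k) (hcov : ∀ x, ∃ w ∈ C ∪ C0, dist x w ≤ r) (s : X) :
    infDist s (range c ∪ C0) ≤ 2 * r := by
  let p : Option (Fin k) → X := fun u => u.elim s c
  have hsep : Pairwise fun u v => infDist s (range c ∪ C0) ≤ dist (p u) (p v) := by
    rintro (_ | i) (_ | j) huv
    · exact absurd rfl huv
    · exact infDist_le_dist_of_mem (Or.inl ⟨j, rfl⟩)
    · rw [dist_comm]; exact infDist_le_dist_of_mem (Or.inl ⟨i, rfl⟩)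
    · rcases lt_or_gt_of_ne fun h : i = j => huv (congrArg some h) with h | h
      · rw [dist_comm]; exact hc.infDist_le_dist s (Or.inr ⟨i, h, rfl⟩)
      · exact hc.infDist_le_dist s (Or.inr ⟨j, h, rfl⟩)
  have hsep0 : ∀ u, ∀ x ∈ C0, infDist s (range c ∪ C0) ≤ dist (p u) x := by
    rintro (_ | i) x hx
    · exact infDist_le_dist_of_mem (Or.inr hx)
    · exact hc.infDist_le_dist s (Or.inl hx)
  refine le_two_mul_of_separated_of_covered hC ?_ hsep hsep0 fun u => hcov (p u)
  rw [Nat.card_eq_fintype_card, Fintype.card_option, Fintype.card_fin]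
  omega

end IsGreedySeq

theorem infDist_range_le_two_mul_of_mem_cluster {ι : Type*} {C0 : Set X} {c y : ι → X}
    {a : X → X} {R : ℝ} (ha : ∀ s, a s ∈ range c ∪ C0) (hR : ∀ s, dist s (a s) ≤ R)
    (hy : ∀ i, y i ∈ {s | a s = c i} ∪ {c i}) (s : X) :
    infDist s (range y ∪ C0) ≤ 2 * R := by
  rcases ha s with ⟨i, hi⟩ | hs
  · have hci : dist (c i) (y i) ≤ R := by
      rcases hy i with hyi | hyi
      · rw [dist_comm, ← show a (y i) = c i from hyi]; exact hR (y i)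
      · rw [hyi, dist_self]; exact dist_nonneg.trans (hR s)
    calc infDist s (range y ∪ C0) ≤ dist s (y i) := infDist_le_dist_of_mem (Or.inl ⟨i, rfl⟩)
      _ ≤ dist s (c i) + dist (c i) (y i) := dist_triangle _ _ _
      _ ≤ 2 * R := by linarith [hi ▸ hR s]
  · calc infDist s (range y ∪ C0) ≤ dist s (a s) := infDist_le_dist_of_mem (Or.inr hs)
      _ ≤ 2 * R := by linarith [hR s, dist_nonneg.trans (hR s)]

end Metric

theorem stmt10_general {X : Type*} [MetricSpace X] [Fintype X] {m : ℕ}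
    (G : X → Fin m) (kf : Fin m → ℕ)
    (k : ℕ) (hk : k = ∑ i, kf i)
    (C0 : Set X)
    (rfair : ℝ)
    (hr : IsLeast {r : ℝ | ∃ C : Set X, (∀ i, (C ∩ {x | G x = i}).ncard = kf i) ∧
        (C ∪ C0).Nonempty ∧ r = ⨆ s : X, Metric.infDist s (C ∪ C0)} rfair)
    (c : Fin k → X) (hgreedy : IsGreedySeq Set.univ C0 c)
    (a : X → X)
    (ha1 : ∀ s, a s ∈ Set.range c ∪ C0)
    (ha2 : ∀ s, dist s (a s) = Metric.infDist s (Set.range c ∪ C0))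
    (y : Fin k → X)
    (hy : ∀ i, y i ∈ {s | a s = c i} ∪ {c i}) :
    ∀ s : X, Metric.infDist s (Set.range y ∪ C0) ≤ 4 * rfair := by
  obtain ⟨C, hCfair, hCne, rfl⟩ := hr.1
  have hCcard : C.ncard = k := by
    rw [Set.ncard_eq_sum_ncard_inter_fiber C.toFinite G, hk]
    exact Finset.sum_congr rfl fun i _ => hCfair i
  have hgreedy_cov : ∀ s, dist s (a s) ≤ 2 * ⨆ s, infDist s (C ∪ C0) := fun s =>
    ha2 s ▸ hgreedy.infDist_le_two_mul C.toFinite hCcard.le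
      (exists_mem_dist_le_iSup_infDist hCne) s
  intro s
  linarith [infDist_range_le_two_mul_of_mem_cluster ha1 hgreedy_cov hy s]

/-- base case of the inductive bound in the proof of Theorem 2 of the
paper: running the greedy strategy on a finite metric space partitioned into groups
`{x | G x = i}` and then exchanging each center `c i` for an arbitrary element `y i` of its
cluster `L i = {s | a s = c i}` (or keeping `c i`) yields covering radius at most
`4 * r*_fair`, where `r*_fair` is the optimal fair `k`-center cost. -/
theorem stmt10 {X : Type*} [MetricSpace X] [Fintype X] [Nonempty X] {m : ℕ}
    (G : X → Fin m) (kf : Fin m → ℕ)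
    (hkf : ∀ i, kf i ≤ Set.ncard {x | G x = i})
    (k : ℕ) (hk : k = ∑ i, kf i) (hkpos : 1 ≤ k)
    (C0 : Set X)
    (rfair : ℝ)
    (hr : IsLeast {r : ℝ | ∃ C : Set X, (∀ i, (C ∩ {x | G x = i}).ncard = kf i) ∧
        (C ∪ C0).Nonempty ∧ r = ⨆ s : X, Metric.infDist s (C ∪ C0)} rfair)
    (c : Fin k → X) (hgreedy : IsGreedySeq Set.univ C0 c) (hinj : Function.Injective c)
    (a : X → X)
    (ha1 : ∀ s, a s ∈ Set.range c ∪ C0)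
    (ha2 : ∀ s, dist s (a s) = Metric.infDist s (Set.range c ∪ C0))
    (y : Fin k → X)
    (hy : ∀ i, y i ∈ {s | a s = c i} ∪ {c i}) :
    ∀ s : X, Metric.infDist s (Set.range y ∪ C0) ≤ 4 * rfair :=
  stmt10_general G kf k hk C0 rfair hr c hgreedy a ha1 ha2 y hy
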